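/- For any hypothesis h and distributions D, D_k with λ_k = inf_{h' ∈ H}(L_D(h') + L_{D_k}(h')), one has L_D(h) ≤ L_{D_k}(h) + (1/2)·d_{H∆H}(D_k, D) + λ_k, where L_D(h) = Pr_{x∼D}[h(x) ≠ f(x)] is the 0-1 risk against a common labeling f. -/
import Mathlib

open MeasureTheory

/-- 0-1 risk of hypothesis `h` against labeling `f` under distribution `D`. -/
noncomputable def risk01 {X : Type*} [MeasurableSpace X]
    (D : Measure X) (h f : X → Bool) : ℝ :=
  (D {x | h x ≠ f x}).toReal

/-- The H∆H-divergence between two probability measures. -/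
noncomputable def dHdH {X : Type*} [MeasurableSpace X]
    (H : Set (X → Bool)) (D D' : Measure X) : ℝ :=
  2 * sSup {x : ℝ | ∃ h ∈ H, ∃ h' ∈ H,
    x = |(D {z | h z ≠ h' z}).toReal - (D' {z | h z ≠ h' z}).toReal|}

/-- Triangle-type inequality for 0-1 disagreement probabilities. -/
lemma tri_measure {X : Type*} [MeasurableSpace X]
    (μ : Measure X) [IsFiniteMeasure μ] (a b c : X → Bool) :
    (μ {x | a x ≠ b x}).toReal ≤
      (μ {x | a x ≠ c x}).toReal + (μ {x | c x ≠ b x}).toReal := by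
  have hsub : {x | a x ≠ b x} ⊆ {x | a x ≠ c x} ∪ {x | c x ≠ b x} := by
    intro x hx
    by_cases hac : a x = c x
    · right; simp only [Set.mem_setOf_eq]; rw [← hac]; exact hx
    · left; exact hac
  have h1 : μ {x | a x ≠ b x} ≤ μ {x | a x ≠ c x} + μ {x | c x ≠ b x} :=
    (measure_mono hsub).trans (measure_union_le _ _)
  have h2 := ENNReal.toReal_mono
    (by finiteness : μ {x | a x ≠ c x} + μ {x | c x ≠ b x} ≠ ⊤) h1
  rwa [ENNReal.toReal_add (measure_ne_top _ _) (measure_ne_top _ _)] at h2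

theorem domain_adaptation_lemma {X : Type*} [MeasurableSpace X]
    (H : Set (X → Bool)) (f : X → Bool)
    (D Dk : Measure X) (hD : IsProbabilityMeasure D)
    (hDk : IsProbabilityMeasure Dk)
    (hmeas : ∀ h ∈ H, ∀ h' ∈ H, MeasurableSet {z | h z ≠ h' z})
    (hmeasf : ∀ h ∈ H, MeasurableSet {z | h z ≠ f z})
    (h : X → Bool) (hh : h ∈ H)
    (lam : ℝ) (hstar : X → Bool) (hhstar : hstar ∈ H)
    (hlam : risk01 D hstar f + risk01 Dk hstar f = lam)
    (hinf : ∀ h' ∈ H, lam ≤ risk01 D h' f + risk01 Dk h' f) :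
    risk01 D h f ≤ risk01 Dk h f + (1 / 2) * dHdH H Dk D + lam := by
  set S := {x : ℝ | ∃ g ∈ H, ∃ g' ∈ H,
    x = |(Dk {z | g z ≠ g' z}).toReal - (D {z | g z ≠ g' z}).toReal|} with hS
  have hbdd : BddAbove S := by
    refine ⟨1, fun x hx => ?_⟩
    obtain ⟨g, _, g', _, rfl⟩ := hx
    have h1 : (Dk {z | g z ≠ g' z}).toReal ≤ 1 := by
      have := prob_le_one (μ := Dk) (s := {z | g z ≠ g' z})
      simpa using ENNReal.toReal_mono (by norm_num) this
    have h2 : (D {z | g z ≠ g' z}).toReal ≤ 1 := by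
      have := prob_le_one (μ := D) (s := {z | g z ≠ g' z})
      simpa using ENNReal.toReal_mono (by norm_num) this
    have h3 : 0 ≤ (Dk {z | g z ≠ g' z}).toReal := ENNReal.toReal_nonneg
    have h4 : 0 ≤ (D {z | g z ≠ g' z}).toReal := ENNReal.toReal_nonneg
    rw [abs_le]; constructor <;> linarith
  have hmem : |(Dk {z | h z ≠ hstar z}).toReal - (D {z | h z ≠ hstar z}).toReal| ∈ S :=
    ⟨h, hh, hstar, hhstar, rfl⟩
  have hsup : |(Dk {z | h z ≠ hstar z}).toReal - (D {z | h z ≠ hstar z}).toReal|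
      ≤ sSup S := le_csSup hbdd hmem
  have hgap : (D {z | h z ≠ hstar z}).toReal ≤
      (Dk {z | h z ≠ hstar z}).toReal + sSup S := by
    have h1 := neg_abs_le ((Dk {z | h z ≠ hstar z}).toReal - (D {z | h z ≠ hstar z}).toReal)
    linarith
  have t1 : (D {x | h x ≠ f x}).toReal ≤
      (D {x | h x ≠ hstar x}).toReal + (D {x | hstar x ≠ f x}).toReal :=
    tri_measure D h f hstar
  have t2 : (Dk {x | h x ≠ hstar x}).toReal ≤
      (Dk {x | h x ≠ f x}).toReal + (Dk {x | f x ≠ hstar x}).toReal :=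
    tri_measure Dk h hstar f
  have hsymm : (Dk {x | f x ≠ hstar x}).toReal = (Dk {x | hstar x ≠ f x}).toReal := by
    congr 2
    ext x; simp [ne_comm]
  have hhalf : (1 / 2) * dHdH H Dk D = sSup S := by
    unfold dHdH; rw [← hS]; ring
  unfold risk01 at *
  rw [hhalf]
  rw [hsymm] at t2
  linarith
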